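/- arXiv:1907.11970 — 2 statements merged into one kernel-verified Lean document; each statement's English description precedes it below -/
import Mathlib

section
/- Let S be a p×p symmetric positive semidefinite matrix, Ψ a p×p positive definite diagonal matrix, and suppose Ψ^{-1/2} S Ψ^{-1/2} = V D Vᵀ is an eigendecomposition with eigenvalues θ_1 ≥ ... ≥ θ_p and V orthogonal. With Λ̂ = Ψ^{1/2} V_q Δ where V_q collects the first q eigenvectors and Δ is diagonal with entries (θ_i − 1)^{1/2} (assuming θ_i > 1 for i ≤ q), the trace satisfies Tr[(Λ̂Λ̂ᵀ + Ψ)⁻¹ S] = Tr[Ψ⁻¹ S] − Σ_{i=1}^q θ_i + q. -/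
open Matrix

theorem stmt_7 (p q : ℕ) (hp : 0 < p) (hq : 0 < q) (hqp : q ≤ p)
    (S : Matrix (Fin p) (Fin p) ℝ) (hS : S.PosSemidef)
    (ψ : Fin p → ℝ) (hψ : ∀ i, 0 < ψ i)
    (V : Matrix (Fin p) (Fin p) ℝ) (hV : Vᵀ * V = 1)
    (θ : Fin p → ℝ) (hdec : Antitone θ)
    (heig : (Matrix.diagonal fun i => (Real.sqrt (ψ i))⁻¹) * S *
        (Matrix.diagonal fun i => (Real.sqrt (ψ i))⁻¹) = V * Matrix.diagonal θ * Vᵀ)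
    (hθ : ∀ i : Fin p, (i : ℕ) < q → 1 < θ i) :
    let Vq : Matrix (Fin p) (Fin q) ℝ := V.submatrix id (Fin.castLE hqp)
    let Δ : Matrix (Fin q) (Fin q) ℝ :=
      Matrix.diagonal fun i => Real.sqrt (θ (Fin.castLE hqp i) - 1)
    let Λhat : Matrix (Fin p) (Fin q) ℝ :=
      Matrix.diagonal (fun i => Real.sqrt (ψ i)) * Vq * Δ
    ((Λhat * Λhatᵀ + Matrix.diagonal ψ)⁻¹ * S).trace
      = ((Matrix.diagonal ψ)⁻¹ * S).trace - (∑ i : Fin q, θ (Fin.castLE hqp i)) + q := by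
  intro Vq Δ Λhat
  have hsq : ∀ i, Real.sqrt (ψ i) ≠ 0 := fun i => ne_of_gt (Real.sqrt_pos.2 (hψ i))
  set R : Matrix (Fin p) (Fin p) ℝ := Matrix.diagonal (fun i => Real.sqrt (ψ i)) with hRdef
  set Ri : Matrix (Fin p) (Fin p) ℝ :=
    Matrix.diagonal (fun i => (Real.sqrt (ψ i))⁻¹) with hRidef
  have hRRi : R * Ri = 1 := by
    rw [hRdef, hRidef, Matrix.diagonal_mul_diagonal, ← Matrix.diagonal_one]
    exact congrArg Matrix.diagonal (funext fun i => mul_inv_cancel₀ (hsq i))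
  have hRiR : Ri * R = 1 := by
    rw [hRdef, hRidef, Matrix.diagonal_mul_diagonal, ← Matrix.diagonal_one]
    exact congrArg Matrix.diagonal (funext fun i => inv_mul_cancel₀ (hsq i))
  have hVVt : V * Vᵀ = 1 := mul_eq_one_comm.mp hV
  have cR : ∀ X : Matrix (Fin p) (Fin p) ℝ, R * (Ri * X) = X := fun X => by
    rw [← Matrix.mul_assoc, hRRi, Matrix.one_mul]
  have cRi : ∀ X : Matrix (Fin p) (Fin p) ℝ, Ri * (R * X) = X := fun X => by
    rw [← Matrix.mul_assoc, hRiR, Matrix.one_mul]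
  have cV : ∀ X : Matrix (Fin p) (Fin p) ℝ, Vᵀ * (V * X) = X := fun X => by
    rw [← Matrix.mul_assoc, hV, Matrix.one_mul]
  have cVt : ∀ X : Matrix (Fin p) (Fin p) ℝ, V * (Vᵀ * X) = X := fun X => by
    rw [← Matrix.mul_assoc, hVVt, Matrix.one_mul]
  -- sum lemma
  have key : ∀ f : Fin p → ℝ, (∀ i : Fin p, ¬ ((i : ℕ) < q) → f i = 0) →
      ∑ i : Fin p, f i = ∑ i : Fin q, f (Fin.castLE hqp i) := by
    intro f hf
    calc ∑ i : Fin p, f i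
        = ∑ i ∈ Finset.univ.map ⟨Fin.castLE hqp, Fin.castLE_injective hqp⟩, f i := by
          refine (Finset.sum_subset (Finset.subset_univ _) ?_).symm
          intro i _ hi
          refine hf i fun hlt => hi ?_
          simp only [Finset.mem_map, Finset.mem_univ, Function.Embedding.coeFn_mk, true_and]
          exact ⟨⟨(i : ℕ), hlt⟩, by ext; simp⟩
      _ = ∑ i : Fin q, f (Fin.castLE hqp i) := Finset.sum_map _ _ _
  set μ : Fin p → ℝ := fun i => if (i : ℕ) < q then θ i else 1 with hμdef
  have hθpos : ∀ i : Fin p, (i : ℕ) < q → θ i ≠ 0 := fun i h =>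
    ne_of_gt (lt_trans one_pos (hθ i h))
  have hμ0 : ∀ i, μ i ≠ 0 := by
    intro i; by_cases h : (i : ℕ) < q <;> simp [hμdef, h, hθpos i]
  -- factor Λhat Λhatᵀ + Ψ
  have hΔΔ : Δ * Δ = Matrix.diagonal (fun i : Fin q => θ (Fin.castLE hqp i) - 1) := by
    show Matrix.diagonal _ * Matrix.diagonal _ = _
    rw [Matrix.diagonal_mul_diagonal]
    exact congrArg Matrix.diagonal (funext fun i =>
      Real.mul_self_sqrt (by linarith [hθ (Fin.castLE hqp i) i.is_lt]))
  have hmid : Vq * Matrix.diagonal (fun i : Fin q => θ (Fin.castLE hqp i) - 1) * Vqᵀ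
      = V * Matrix.diagonal (fun i : Fin p => if (i : ℕ) < q then θ i - 1 else 0) * Vᵀ := by
    ext j k
    rw [Matrix.mul_apply, Matrix.mul_apply]
    simp only [Matrix.mul_diagonal, Matrix.transpose_apply]
    rw [key (fun i => V j i * (if (i : ℕ) < q then θ i - 1 else 0) * V k i)
      (fun i hi => by simp [hi])]
    apply Finset.sum_congr rfl
    intro i _
    simp [Vq, Fin.is_lt]
  have hA : Λhat * Λhatᵀ + Matrix.diagonal ψ
      = R * (V * Matrix.diagonal μ * Vᵀ) * R := by
    have hΛ : Λhat = R * Vq * Δ := rfl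
    have hΛt : Λhatᵀ = Δ * Vqᵀ * R := by
      have h1 : Δᵀ = Δ := Matrix.diagonal_transpose _
      have h2 : Rᵀ = R := Matrix.diagonal_transpose _
      rw [hΛ, Matrix.transpose_mul, Matrix.transpose_mul, h1, h2, Matrix.mul_assoc]
    have hψRR : Matrix.diagonal ψ = R * (V * Matrix.diagonal (fun _ : Fin p => (1:ℝ)) * Vᵀ) * R := by
      rw [Matrix.diagonal_one, Matrix.mul_one, hVVt, Matrix.mul_one, hRdef,
        Matrix.diagonal_mul_diagonal]
      exact congrArg Matrix.diagonal (funext fun i =>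
        (Real.mul_self_sqrt (le_of_lt (hψ i))).symm)
    rw [hΛ, hΛt, hψRR]
    have : R * Vq * Δ * (Δ * Vqᵀ * R) = R * (Vq * (Δ * Δ) * Vqᵀ) * R := by
      simp only [Matrix.mul_assoc]
    rw [this, hΔΔ, hmid, ← Matrix.add_mul, ← Matrix.mul_add, ← Matrix.add_mul,
      ← Matrix.mul_add, Matrix.diagonal_add]
    have hfun : (fun i : Fin p => (if (i : ℕ) < q then θ i - 1 else 0) + 1) = μ := by
      funext i
      by_cases h : (i : ℕ) < q <;> simp [hμdef, h]
    rw [hfun]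
  have hDD : Matrix.diagonal μ * Matrix.diagonal (fun i => (μ i)⁻¹) = 1 := by
    rw [Matrix.diagonal_mul_diagonal, ← Matrix.diagonal_one]
    exact congrArg Matrix.diagonal (funext fun i => mul_inv_cancel₀ (hμ0 i))
  have cD : ∀ X : Matrix (Fin p) (Fin p) ℝ,
      Matrix.diagonal μ * (Matrix.diagonal (fun i => (μ i)⁻¹) * X) = X := fun X => by
    rw [← Matrix.mul_assoc, hDD, Matrix.one_mul]
  have hB : (Λhat * Λhatᵀ + Matrix.diagonal ψ)⁻¹
      = Ri * (V * Matrix.diagonal (fun i => (μ i)⁻¹) * Vᵀ) * Ri := by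
    apply Matrix.inv_eq_right_inv
    rw [hA]
    simp only [Matrix.mul_assoc]
    rw [cR, cV, cD, cVt, hRRi]
  -- factor S
  have hS' : S = R * (V * Matrix.diagonal θ * Vᵀ) * R := by
    rw [← heig]
    simp only [Matrix.mul_assoc]
    rw [cR, hRiR, Matrix.mul_one]
  -- trace helper
  have tr : ∀ d : Fin p → ℝ,
      (Ri * (V * (Matrix.diagonal d * (Vᵀ * R)))).trace = ∑ i, d i := by
    intro d
    rw [Matrix.trace_mul_comm]
    simp only [Matrix.mul_assoc]
    rw [hRRi, Matrix.mul_one, Matrix.trace_mul_comm]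
    simp only [Matrix.mul_assoc]
    rw [hV, Matrix.mul_one, Matrix.trace_diagonal]
  have t1 : ((Λhat * Λhatᵀ + Matrix.diagonal ψ)⁻¹ * S).trace = ∑ i, (μ i)⁻¹ * θ i := by
    rw [hB, hS']
    simp only [Matrix.mul_assoc]
    rw [cRi, cV, ← Matrix.mul_assoc (Matrix.diagonal fun i => (μ i)⁻¹) (Matrix.diagonal θ),
      Matrix.diagonal_mul_diagonal]
    exact tr _
  have hψinv : (Matrix.diagonal ψ)⁻¹ = Ri * Ri := by
    apply Matrix.inv_eq_right_inv
    have hψRR : Matrix.diagonal ψ = R * R := by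
      rw [hRdef, Matrix.diagonal_mul_diagonal]
      exact congrArg Matrix.diagonal (funext fun i =>
        (Real.mul_self_sqrt (le_of_lt (hψ i))).symm)
    rw [hψRR]
    simp only [Matrix.mul_assoc]
    rw [cR, hRRi]
  have t2 : ((Matrix.diagonal ψ)⁻¹ * S).trace = ∑ i, θ i := by
    rw [hψinv, hS']
    simp only [Matrix.mul_assoc]
    rw [cRi]
    exact tr θ
  rw [t1, t2]
  -- arithmetic
  have h1 : ∀ i : Fin p, (μ i)⁻¹ * θ i = θ i + (if (i : ℕ) < q then 1 - θ i else 0) := by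
    intro i
    by_cases h : (i : ℕ) < q
    · simp only [hμdef, h, if_true]
      rw [inv_mul_cancel₀ (hθpos i h)]; ring
    · simp [hμdef, h]
  rw [Finset.sum_congr rfl (fun i _ => h1 i), Finset.sum_add_distrib]
  rw [key (fun i => if (i : ℕ) < q then 1 - θ i else 0) (fun i hi => by simp [hi])]
  have : ∑ i : Fin q, (if ((Fin.castLE hqp i : Fin p) : ℕ) < q then 1 - θ (Fin.castLE hqp i) else 0)
      = ∑ i : Fin q, (1 - θ (Fin.castLE hqp i)) := by
    apply Finset.sum_congr rfl
    intro i _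
    simp [Fin.is_lt]
  rw [this, Finset.sum_sub_distrib, Finset.sum_const, Finset.card_univ, Fintype.card_fin,
    nsmul_eq_mul, mul_one]
  ring
end

section
/- Under the setup of the profile-likelihood lemma, the Gaussian log-likelihood at (Λ̂, Ψ) equals −(n/2){p log(2π) + log det Ψ + Tr(Ψ⁻¹S) + Σ_{i=1}^q (log θ_i − θ_i + 1)}, where Λ̂ = Ψ^{1/2} V_q Δ, θ_i are the top q eigenvalues of Ψ^{-1/2}SΨ^{-1/2} (each assumed > 1), and Δ = diag((θ_i−1)^{1/2}). -/
/-!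
With `A = Ψ^{1/2} V`, which is invertible with `A Aᵀ = Ψ`, the whitening hypothesis reads
`S = A diag(θ) Aᵀ`, and `Σ = Λ̂ Λ̂ᵀ + Ψ = A diag(m) Aᵀ` where `m i = θ i` on the top `q`
indices and `m i = 1` elsewhere. Congruence by `A` then gives `log det Σ = log det Ψ + ∑ log m i` and
`tr (Σ⁻¹ S) = tr (Ψ⁻¹ S) + ∑ (θ i / m i - θ i)`; the summand `log m i + θ i / m i - θ i`
vanishes off the top `q` indices and equals `log θ i - θ i + 1` on them.
-/

open Matrix Real

open Function in
theorem Fintype.sum_extend_zero_apply {ι κ R M : Type*} [Fintype ι] [Fintype κ] [Zero R]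
    [AddCommMonoid M] {e : κ → ι} (he : Injective e) (d : κ → R) (g : ι → R → M)
    (hg : ∀ i, g i 0 = 0) :
    ∑ i, g i (extend e d 0 i) = ∑ k, g (e k) (d k) :=
  (Fintype.sum_of_injective e he _ _
    (fun i hi => by rw [extend_apply' _ _ _ (by simpa using hi), Pi.zero_apply, hg])
    (fun k => by rw [he.extend_apply])).symm

namespace Matrix

variable {ι κ : Type*} [Fintype ι] [DecidableEq ι]

theorem submatrix_mul_diagonal_mul_transpose {m R : Type*} [Fintype κ] [DecidableEq κ]
    [CommSemiring R] (V : Matrix m ι R) {e : κ → ι} (he : Function.Injective e) (d : κ → R) :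
    V.submatrix id e * diagonal d * (V.submatrix id e)ᵀ =
      V * diagonal (Function.extend e d 0) * Vᵀ := by
  ext a b
  rw [mul_apply, mul_apply]
  simp only [mul_diagonal, transpose_apply, submatrix_apply, id_eq]
  exact (Fintype.sum_extend_zero_apply he d (fun i x => V a i * x * V b i)
    (fun i => by simp)).symm

theorem diagonal_sqrt_mul_diagonal_sqrt (f : ι → ℝ) (hf : ∀ i, 0 ≤ f i) :
    diagonal (fun i => √(f i)) * diagonal (fun i => √(f i)) = diagonal f := by
  rw [diagonal_mul_diagonal]
  exact congrArg diagonal (funext fun i => mul_self_sqrt (hf i))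

theorem diagonal_sqrt_mul_mul_transpose_of_transpose_mul_self {f : ι → ℝ} (hf : ∀ i, 0 ≤ f i)
    {V : Matrix ι ι ℝ} (hV : Vᵀ * V = 1) :
    diagonal (fun i => √(f i)) * V * (diagonal (fun i => √(f i)) * V)ᵀ = diagonal f := by
  rw [transpose_mul, diagonal_transpose, Matrix.mul_assoc, ← Matrix.mul_assoc V,
    mul_eq_one_comm.mp hV, Matrix.one_mul, diagonal_sqrt_mul_diagonal_sqrt f hf]

theorem eq_diagonal_mul_mul_diagonal_of_diagonal_inv_mul_mul_diagonal_inv {K : Type*} [Field K]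
    {w : ι → K} (hw : ∀ i, w i ≠ 0) {S B : Matrix ι ι K}
    (h : diagonal (fun i => (w i)⁻¹) * S * diagonal (fun i => (w i)⁻¹) = B) :
    S = diagonal w * B * diagonal w := by
  have hww : diagonal w * diagonal (fun i => (w i)⁻¹) = 1 := by
    rw [diagonal_mul_diagonal, ← diagonal_one]
    exact congrArg diagonal (funext fun i => mul_inv_cancel₀ (hw i))
  rw [← h, ← Matrix.mul_assoc, ← Matrix.mul_assoc, hww, Matrix.one_mul, Matrix.mul_assoc,
    mul_eq_one_comm.mp hww, Matrix.mul_one]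

theorem det_mul_diagonal_mul_transpose {R : Type*} [CommRing R] (A : Matrix ι ι R) (m : ι → R) :
    (A * diagonal m * Aᵀ).det = A.det ^ 2 * ∏ i, m i := by
  rw [det_mul, det_mul, det_diagonal, det_transpose]
  ring

theorem trace_inv_mul_diagonal_mul_transpose_mul {K : Type*} [Field K] {A : Matrix ι ι K}
    (hA : A.det ≠ 0) {m : ι → K} (hm : ∀ i, m i ≠ 0) (θ : ι → K) :
    ((A * diagonal m * Aᵀ)⁻¹ * (A * diagonal θ * Aᵀ)).trace = ∑ i, θ i / m i := by
  have hAu : IsUnit A.det := hA.isUnit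
  have hATu : IsUnit Aᵀ.det := by rwa [det_transpose]
  have hinv : (diagonal m)⁻¹ = diagonal fun i => (m i)⁻¹ := by
    refine inv_eq_right_inv ?_
    rw [diagonal_mul_diagonal, ← diagonal_one]
    exact congrArg diagonal (funext fun i => mul_inv_cancel₀ (hm i))
  rw [mul_inv_rev, mul_inv_rev, hinv]
  simp only [Matrix.mul_assoc, nonsing_inv_mul_cancel_left _ _ hAu]
  rw [trace_mul_comm, Matrix.mul_assoc, Matrix.mul_assoc, mul_nonsing_inv _ hATu,
    Matrix.mul_one, diagonal_mul_diagonal, trace_diagonal]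
  simp only [div_eq_inv_mul]

theorem log_det_add_trace_inv_mul_diagonal_mul_transpose {A : Matrix ι ι ℝ} (hA : A.det ≠ 0)
    {m : ι → ℝ} (hm : ∀ i, 0 < m i) (θ : ι → ℝ) :
    log (A * diagonal m * Aᵀ).det + ((A * diagonal m * Aᵀ)⁻¹ * (A * diagonal θ * Aᵀ)).trace =
      log (A * Aᵀ).det + ((A * Aᵀ)⁻¹ * (A * diagonal θ * Aᵀ)).trace +
        ∑ i, (log (m i) + θ i / m i - θ i) := by
  have hA1 : A * Aᵀ = A * diagonal (fun _ => 1) * Aᵀ := by rw [diagonal_one, Matrix.mul_one]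
  have hm0 : ∀ i, m i ≠ 0 := fun i => (hm i).ne'
  rw [hA1, det_mul_diagonal_mul_transpose, det_mul_diagonal_mul_transpose,
    trace_inv_mul_diagonal_mul_transpose_mul hA hm0,
    trace_inv_mul_diagonal_mul_transpose_mul hA fun _ => one_ne_zero,
    log_mul (pow_ne_zero 2 hA) (Finset.prod_ne_zero_iff.mpr fun i _ => hm0 i),
    log_prod fun i _ => hm0 i]
  simp only [Finset.prod_const_one, mul_one, div_one, Finset.sum_sub_distrib,
    Finset.sum_add_distrib]
  ring

theorem mul_submatrix_mul_diagonal_sqrt_mul_transpose {ι' : Type*} [Fintype ι'] [DecidableEq ι']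
    [Fintype κ] [DecidableEq κ] (w : ι → ℝ) (V : Matrix ι ι' ℝ) {e : κ → ι'}
    (he : Function.Injective e) {d : κ → ℝ} (hd : ∀ k, 0 ≤ d k) :
    diagonal w * V.submatrix id e * diagonal (fun k => √(d k)) *
        (diagonal w * V.submatrix id e * diagonal (fun k => √(d k)))ᵀ =
      diagonal w * V * diagonal (Function.extend e d 0) * (diagonal w * V)ᵀ := by
  calc _ = diagonal w * (V.submatrix id e * diagonal d * (V.submatrix id e)ᵀ) * diagonal w := by
        rw [← diagonal_sqrt_mul_diagonal_sqrt d hd]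
        simp only [transpose_mul, diagonal_transpose, Matrix.mul_assoc]
    _ = _ := by
        rw [submatrix_mul_diagonal_mul_transpose V he d]
        simp only [transpose_mul, diagonal_transpose, Matrix.mul_assoc]

end Matrix

open Function in
theorem sum_log_add_div_extend_sub {ι κ : Type*} [Fintype ι] [Fintype κ] {e : κ → ι}
    (he : Injective e) (θ : ι → ℝ) (hθ : ∀ k, θ (e k) ≠ 0) :
    ∑ i, (log (extend e (fun k => θ (e k) - 1) 0 i + 1)
        + θ i / (extend e (fun k => θ (e k) - 1) 0 i + 1) - θ i) =
      ∑ k, (log (θ (e k)) - θ (e k) + 1) := by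
  rw [Fintype.sum_extend_zero_apply he _ (fun i x => log (x + 1) + θ i / (x + 1) - θ i)
    (fun i => by simp)]
  refine Finset.sum_congr rfl fun k _ => ?_
  simp only [sub_add_cancel, div_self (hθ k)]
  ring

theorem stmt_8_general (n p q : ℕ) (hqp : q ≤ p)
    (S : Matrix (Fin p) (Fin p) ℝ)
    (ψ : Fin p → ℝ) (hψ : ∀ i, 0 < ψ i)
    (V : Matrix (Fin p) (Fin p) ℝ) (hV : Vᵀ * V = 1)
    (θ : Fin p → ℝ)
    (heig : (Matrix.diagonal fun i => (Real.sqrt (ψ i))⁻¹) * S *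
        (Matrix.diagonal fun i => (Real.sqrt (ψ i))⁻¹) = V * Matrix.diagonal θ * Vᵀ)
    (hθ : ∀ i : Fin p, (i : ℕ) < q → 1 < θ i) :
    let Vq : Matrix (Fin p) (Fin q) ℝ := V.submatrix id (Fin.castLE hqp)
    let Δ : Matrix (Fin q) (Fin q) ℝ :=
      Matrix.diagonal fun i => Real.sqrt (θ (Fin.castLE hqp i) - 1)
    let Λhat : Matrix (Fin p) (Fin q) ℝ :=
      Matrix.diagonal (fun i => Real.sqrt (ψ i)) * Vq * Δ
    let Sig : Matrix (Fin p) (Fin p) ℝ := Λhat * Λhatᵀ + Matrix.diagonal ψ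
    (-((n : ℝ) / 2) * (p * Real.log (2 * Real.pi) + Real.log Sig.det + (Sig⁻¹ * S).trace))
      = -((n : ℝ) / 2) * (p * Real.log (2 * Real.pi)
          + Real.log (Matrix.diagonal ψ).det + ((Matrix.diagonal ψ)⁻¹ * S).trace
          + ∑ i : Fin q, (Real.log (θ (Fin.castLE hqp i)) - θ (Fin.castLE hqp i) + 1)) := by
  intro Vq Δ Λhat Sig
  set e := Fin.castLE hqp
  have he : Function.Injective e := Fin.castLE_injective hqp
  have hd : ∀ k, 0 ≤ θ (e k) - 1 := fun k => sub_nonneg.mpr (hθ (e k) k.isLt).le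
  have hsqrt : ∀ i, √(ψ i) ≠ 0 := fun i => (sqrt_pos.mpr (hψ i)).ne'
  set A := diagonal (fun i => √(ψ i)) * V
  have hA : A.det ≠ 0 := by
    rw [det_mul, det_diagonal]
    exact mul_ne_zero (Finset.prod_ne_zero_iff.mpr fun i _ => hsqrt i)
      (det_ne_zero_of_left_inverse hV)
  have hΨ : diagonal ψ = A * Aᵀ :=
    (diagonal_sqrt_mul_mul_transpose_of_transpose_mul_self (fun i => (hψ i).le) hV).symm
  have hS : S = A * diagonal θ * Aᵀ := by
    rw [eq_diagonal_mul_mul_diagonal_of_diagonal_inv_mul_mul_diagonal_inv hsqrt heig]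
    simp only [A, transpose_mul, diagonal_transpose, Matrix.mul_assoc]
  set c := Function.extend e (fun k => θ (e k) - 1) 0
  have hc : 0 ≤ c := Function.extend_nonneg hd le_rfl
  have hm : ∀ i, 0 < c i + 1 := fun i => add_pos_of_nonneg_of_pos (hc i) one_pos
  have hSig : Sig = A * diagonal (fun i => c i + 1) * Aᵀ := by
    rw [show Sig = Λhat * Λhatᵀ + diagonal ψ from rfl,
      mul_submatrix_mul_diagonal_sqrt_mul_transpose _ V he hd, hΨ,
      show diagonal (fun i => c i + 1) = diagonal c + 1 by rw [← diagonal_one, diagonal_add],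
      Matrix.mul_add, Matrix.add_mul, Matrix.mul_one]
  rw [hSig, hΨ, hS, ← sum_log_add_div_extend_sub he θ fun k => by linarith [hd k]]
  linear_combination (-(n : ℝ) / 2) * log_det_add_trace_inv_mul_diagonal_mul_transpose hA hm θ

theorem stmt_8 (n p q : ℕ) (hn : 0 < n) (hp : 0 < p) (hq : 0 < q) (hqp : q ≤ p)
    (S : Matrix (Fin p) (Fin p) ℝ) (hS : S.PosSemidef)
    (ψ : Fin p → ℝ) (hψ : ∀ i, 0 < ψ i)
    (V : Matrix (Fin p) (Fin p) ℝ) (hV : Vᵀ * V = 1)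
    (θ : Fin p → ℝ) (hdec : Antitone θ)
    (heig : (Matrix.diagonal fun i => (Real.sqrt (ψ i))⁻¹) * S *
        (Matrix.diagonal fun i => (Real.sqrt (ψ i))⁻¹) = V * Matrix.diagonal θ * Vᵀ)
    (hθ : ∀ i : Fin p, (i : ℕ) < q → 1 < θ i) :
    let Vq : Matrix (Fin p) (Fin q) ℝ := V.submatrix id (Fin.castLE hqp)
    let Δ : Matrix (Fin q) (Fin q) ℝ :=
      Matrix.diagonal fun i => Real.sqrt (θ (Fin.castLE hqp i) - 1)
    let Λhat : Matrix (Fin p) (Fin q) ℝ :=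
      Matrix.diagonal (fun i => Real.sqrt (ψ i)) * Vq * Δ
    let Sig : Matrix (Fin p) (Fin p) ℝ := Λhat * Λhatᵀ + Matrix.diagonal ψ
    (-((n : ℝ) / 2) * (p * Real.log (2 * Real.pi) + Real.log Sig.det + (Sig⁻¹ * S).trace))
      = -((n : ℝ) / 2) * (p * Real.log (2 * Real.pi)
          + Real.log (Matrix.diagonal ψ).det + ((Matrix.diagonal ψ)⁻¹ * S).trace
          + ∑ i : Fin q, (Real.log (θ (Fin.castLE hqp i)) - θ (Fin.castLE hqp i) + 1)) :=
  stmt_8_general n p q hqp S ψ hψ V hV θ heig hθ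
end
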